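/- Let n ≥ 6, 0 < i < j < n/2, gcd(n,i,j) = 1, i+j ≠ n/2. Then in C_n(i,j), distinct vertices a and b have a common neighbor if and only if b - a ∈ {2i, -2i, 2j, -2j, i+j, -(i+j), i-j, j-i} (mod n). -/

import Mathlib

/-! A common neighbour `c` of `a` and `b` exists exactly when `b - a = s - t` for two connection
offsets `s, t ∈ {±i, ±j}` (take `c = a - t`), and the nonzero differences `s - t` are precisely
`±2i, ±2j, ±(i + j), ±(i - j)`. -/

/-- The two-generator circulant graph `C_n(i,j)` on `ℤ/nℤ`:
distinct `a, b` are adjacent iff `a - b ∈ {i, -i, j, -j}`. -/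
def circulant (n : ℕ) (i j : ZMod n) : SimpleGraph (ZMod n) where
  Adj a b := a ≠ b ∧ (a - b = i ∨ a - b = -i ∨ a - b = j ∨ a - b = -j)
  symm := by
    constructor
    rintro a b ⟨hab, h⟩
    refine ⟨fun h' => hab h'.symm, ?_⟩
    have hba : b - a = -(a - b) := by ring
    rcases h with h | h | h | h <;> rw [hba, h] <;> simp
  loopless := by constructor; rintro a ⟨h, -⟩; exact h rfl

open Pointwise

lemma natCast_zmod_ne_zero {n k : ℕ} (hk : 0 < k) (hkn : k < n) : (k : ZMod n) ≠ 0 := by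
  rw [Ne, ZMod.natCast_eq_zero_iff]
  exact fun h => absurd (Nat.le_of_dvd hk h) (by omega)

lemma plusMinus_sub_plusMinus {R : Type*} [CommRing R] (i j : R) :
    ({i, -i, j, -j} : Set R) - {i, -i, j, -j} =
      insert 0 {2 * i, -(2 * i), 2 * j, -(2 * j), i + j, -(i + j), i - j, j - i} := by
  ext x
  simp only [Set.mem_sub, Set.mem_insert_iff, Set.mem_singleton_iff]
  constructor
  · rintro ⟨s, hs, t, ht, rfl⟩
    rcases hs with rfl | rfl | rfl | rfl <;> rcases ht with rfl | rfl | rfl | rfl <;> grind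
  · rintro (rfl | rfl | rfl | rfl | rfl | rfl | rfl | rfl | rfl)
    exacts [⟨i, by simp, i, by simp, by ring⟩, ⟨i, by simp, -i, by simp, by ring⟩,
      ⟨-i, by simp, i, by simp, by ring⟩, ⟨j, by simp, -j, by simp, by ring⟩,
      ⟨-j, by simp, j, by simp, by ring⟩, ⟨i, by simp, -j, by simp, by ring⟩,
      ⟨-i, by simp, j, by simp, by ring⟩, ⟨i, by simp, j, by simp, by ring⟩,
      ⟨j, by simp, i, by simp, by ring⟩]

section

variable {n : ℕ} {i j : ZMod n}

lemma circulant_adj_iff (hi : i ≠ 0) (hj : j ≠ 0) (a b : ZMod n) :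
    (circulant n i j).Adj a b ↔ a - b ∈ ({i, -i, j, -j} : Set (ZMod n)) := by
  simp only [circulant, Set.mem_insert_iff, Set.mem_singleton_iff, and_iff_right_iff_imp]
  rintro hab rfl
  rcases hab with h | h | h | h <;> simp_all [eq_comm (a := (0 : ZMod n))]

lemma exists_circulant_common_neighbor_iff (hi : i ≠ 0) (hj : j ≠ 0) (a b : ZMod n) :
    (∃ c, (circulant n i j).Adj a c ∧ (circulant n i j).Adj b c) ↔
      b - a ∈ ({i, -i, j, -j} : Set (ZMod n)) - {i, -i, j, -j} := by
  simp only [circulant_adj_iff hi hj, Set.mem_sub]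
  constructor
  · rintro ⟨c, hac, hbc⟩
    exact ⟨b - c, hbc, a - c, hac, by ring⟩
  · rintro ⟨s, hs, t, ht, hst⟩
    exact ⟨a - t, by rwa [sub_sub_cancel], by convert hs using 1; linear_combination -hst⟩

end

theorem stmt_15_general (n i j : ℕ) (hi : 0 < i) (hij : i < j)
    (hj : 2 * j < n) :
    ∀ a b : ZMod n, a ≠ b →
      ((∃ c : ZMod n, (circulant n (i : ZMod n) (j : ZMod n)).Adj a c ∧
          (circulant n (i : ZMod n) (j : ZMod n)).Adj b c) ↔
        b - a ∈ ({2 * (i : ZMod n), -(2 * (i : ZMod n)), 2 * (j : ZMod n), -(2 * (j : ZMod n)),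
          (i : ZMod n) + (j : ZMod n), -((i : ZMod n) + (j : ZMod n)),
          (i : ZMod n) - (j : ZMod n), (j : ZMod n) - (i : ZMod n)} : Set (ZMod n))) := by
  intro a b hab
  rw [exists_circulant_common_neighbor_iff (natCast_zmod_ne_zero hi (by omega))
    (natCast_zmod_ne_zero (by omega) (by omega)), plusMinus_sub_plusMinus, Set.mem_insert_iff,
    or_iff_right (sub_ne_zero.mpr hab.symm)]

theorem stmt_15 (n i j : ℕ) (hn : 6 ≤ n) (hi : 0 < i) (hij : i < j)
    (hj : 2 * j < n) (hgcd : Nat.gcd n (Nat.gcd i j) = 1)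
    (hsum : 2 * (i + j) ≠ n) :
    ∀ a b : ZMod n, a ≠ b →
      ((∃ c : ZMod n, (circulant n (i : ZMod n) (j : ZMod n)).Adj a c ∧
          (circulant n (i : ZMod n) (j : ZMod n)).Adj b c) ↔
        b - a ∈ ({2 * (i : ZMod n), -(2 * (i : ZMod n)), 2 * (j : ZMod n), -(2 * (j : ZMod n)),
          (i : ZMod n) + (j : ZMod n), -((i : ZMod n) + (j : ZMod n)),
          (i : ZMod n) - (j : ZMod n), (j : ZMod n) - (i : ZMod n)} : Set (ZMod n))) :=
  stmt_15_general n i j hi hij hj
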